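/- For N ≥ 2 Hermitian observables A_1, ..., A_N, a density matrix ρ, and α, β > 0: ∑_{i=1}^N Δ²_ρ(A_i) ≥ (1/(αN + (N−2)β)) · [ β·∑_{1≤i<j≤N} Δ²_ρ(A_i + A_j) + (2α/(N(N−1)))·(∑_{1≤i<j≤N} Δ_ρ(A_i − A_j))² + (α−β)·Δ²_ρ(∑_{i=1}^N A_i) ] (bound Y of Theorem 2). -/

import Mathlib

open Finset ComplexOrder

/-- Variance of an observable `M` in the state `ρ`. -/
noncomputable def qvar {d : ℕ} (ρ M : Matrix (Fin d) (Fin d) ℂ) : ℝ :=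
  ((ρ * M ^ 2).trace - (ρ * M).trace ^ 2).re

/-- Standard deviation of an observable `M` in the state `ρ`. -/
noncomputable def qdev {d : ℕ} (ρ M : Matrix (Fin d) (Fin d) ℂ) : ℝ :=
  Real.sqrt (qvar ρ M)

/-! With `S = ∑ Δ²(Aᵢ)` and `V = Δ²(∑ Aᵢ)`, bilinearity of the covariance gives
`∑_{i<j} Δ²(Aᵢ + Aⱼ) = (N - 2) S + V` and `∑_{i<j} Δ²(Aᵢ - Aⱼ) = N S - V`.
Cauchy–Schwarz over the `N (N - 1) / 2` pairs bounds `(∑_{i<j} Δ(Aᵢ - Aⱼ))²` by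
`N (N - 1) / 2 · (N S - V)`, so the bracket is at most
`β ((N - 2) S + V) + α (N S - V) + (α - β) V = (α N + (N - 2) β) S`. -/

open scoped Matrix

section PairSums

variable {ι : Type*} [Fintype ι] [LinearOrder ι]

theorem Finset.sum_sum_eq_sum_lt_add_sum_diag {M : Type*} [AddCommMonoid M] (g : ι → ι → M) :
    ∑ i, ∑ j, g i j = ∑ i, ∑ j ∈ univ.filter (i < ·), (g i j + g j i) + ∑ i, g i i := by
  have split : ∀ i j, g i j = (if i < j then g i j else 0) + (if j < i then g i j else 0)
      + (if i = j then g i j else 0) := by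
    intro i j
    rcases lt_trichotomy i j with h | rfl | h
    · simp [h, h.not_gt, h.ne]
    · simp
    · simp [h, h.not_gt, h.ne']
  have swap : ∑ i, ∑ j ∈ univ.filter (· < i), g i j = ∑ i, ∑ j ∈ univ.filter (i < ·), g j i :=
    sum_comm' fun _ _ => by simp [and_comm]
  rw [sum_congr rfl fun i _ => sum_congr rfl fun j _ => split i j]
  simp only [sum_add_distrib, sum_ite_eq, mem_univ, if_true, ← swap]
  simp only [sum_filter]

theorem Finset.sum_lt_eq_sum_filter_product {M : Type*} [AddCommMonoid M] (f : ι → ι → M) :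
    ∑ i, ∑ j ∈ univ.filter (i < ·), f i j
      = ∑ p ∈ (univ ×ˢ univ : Finset (ι × ι)).filter (fun p => p.1 < p.2), f p.1 p.2 := by
  rw [sum_filter, sum_product]
  simp only [sum_filter]

theorem Finset.two_mul_card_filter_lt_add_card :
    2 * ((univ ×ˢ univ : Finset (ι × ι)).filter (fun p => p.1 < p.2)).card + Fintype.card ι
      = Fintype.card ι * Fintype.card ι := by
  have h := sum_sum_eq_sum_lt_add_sum_diag fun (_ _ : ι) => 1
  rw [card_eq_sum_ones, ← sum_lt_eq_sum_filter_product fun _ _ => 1]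
  simp only [sum_const, card_univ, smul_eq_mul, mul_one, mul_sum] at h ⊢
  simp only [h, mul_comm]

theorem Finset.two_mul_sq_sum_lt_le (f : ι → ι → ℝ) :
    2 * (∑ i, ∑ j ∈ univ.filter (i < ·), f i j) ^ 2
      ≤ (Fintype.card ι * (Fintype.card ι - 1) : ℝ) * ∑ i, ∑ j ∈ univ.filter (i < ·), f i j ^ 2 := by
  have hcard : (2 * ((univ ×ˢ univ : Finset (ι × ι)).filter (fun p => p.1 < p.2)).card : ℝ)
      = Fintype.card ι * (Fintype.card ι - 1) := by
    have h := congrArg (Nat.cast (R := ℝ)) (two_mul_card_filter_lt_add_card (ι := ι))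
    push_cast at h
    linarith
  rw [sum_lt_eq_sum_filter_product, sum_lt_eq_sum_filter_product (fun i j => f i j ^ 2), ← hcard,
    mul_assoc]
  exact mul_le_mul_of_nonneg_left sq_sum_le_card_mul_sum_sq zero_le_two

end PairSums

section PairSumsOfBilinForm

variable {ι R M : Type*} [Fintype ι] [LinearOrder ι] [CommRing R] [AddCommGroup M] [Module R M]
  (B : LinearMap.BilinForm R M) (v : ι → M)

theorem LinearMap.BilinForm.sum_lt_apply_add_add :
    ∑ i, ∑ j ∈ univ.filter (i < ·), B (v i + v j) (v i + v j) + 2 * ∑ i, B (v i) (v i)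
      = Fintype.card ι * ∑ i, B (v i) (v i) + B (∑ i, v i) (∑ i, v i) := by
  let g i j := B (v i) (v i) + B (v i) (v j)
  have hpair : ∀ i j, B (v i + v j) (v i + v j) = g i j + g j i := fun i j => by
    simp only [g, map_add, LinearMap.add_apply]; abel
  have hdiag : ∑ i, g i i = 2 * ∑ i, B (v i) (v i) := by
    simp only [g, ← two_mul, mul_sum]
  rw [sum_congr rfl fun i _ => sum_congr rfl fun j _ => hpair i j, ← hdiag,
    ← sum_sum_eq_sum_lt_add_sum_diag]
  simp only [g, sum_add_distrib, sum_const, card_univ, nsmul_eq_mul, ← mul_sum, map_sum,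
    LinearMap.sum_apply]
  rw [sum_comm]

theorem LinearMap.BilinForm.sum_lt_apply_sub_sub :
    ∑ i, ∑ j ∈ univ.filter (i < ·), B (v i - v j) (v i - v j) + B (∑ i, v i) (∑ i, v i)
      = Fintype.card ι * ∑ i, B (v i) (v i) := by
  let g i j := B (v i) (v i) - B (v i) (v j)
  have hpair : ∀ i j, B (v i - v j) (v i - v j) = g i j + g j i := fun i j => by
    simp only [g, map_sub, LinearMap.sub_apply]; abel
  have hdiag : ∑ i, g i i = 0 := by simp only [g, sub_self, sum_const_zero]
  rw [sum_congr rfl fun i _ => sum_congr rfl fun j _ => hpair i j, ← add_zero (∑ i, ∑ j ∈ _, _),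
    ← hdiag, ← sum_sum_eq_sum_lt_add_sum_diag]
  simp only [g, sum_sub_distrib, sum_const, card_univ, nsmul_eq_mul, ← mul_sum, map_sum,
    LinearMap.sum_apply]
  rw [sum_comm, sub_add_cancel]

end PairSumsOfBilinForm

section Covariance

variable {n R : Type*} [Fintype n] [CommRing R]

def Matrix.qcov (ρ : Matrix n n R) : LinearMap.BilinForm R (Matrix n n R) :=
  LinearMap.mk₂ R (fun X Y => (ρ * (X * Y)).trace - (ρ * X).trace * (ρ * Y).trace)
    (fun _ _ _ => by simp only [Matrix.add_mul, Matrix.mul_add, Matrix.trace_add]; ring)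
    (fun _ _ _ => by
      simp only [Matrix.smul_mul, Matrix.mul_smul, Matrix.trace_smul, smul_eq_mul]; ring)
    (fun _ _ _ => by simp only [Matrix.mul_add, Matrix.trace_add]; ring)
    (fun _ _ _ => by simp only [Matrix.mul_smul, Matrix.trace_smul, smul_eq_mul]; ring)

end Covariance

theorem qvar_eq_re_qcov {d : ℕ} (ρ M : Matrix (Fin d) (Fin d) ℂ) : qvar ρ M = (ρ.qcov M M).re := by
  simp [qvar, Matrix.qcov, sq]

section PairSumsOfVariances

variable {ι : Type*} [Fintype ι] [LinearOrder ι] {d : ℕ} (ρ : Matrix (Fin d) (Fin d) ℂ)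
  (A : ι → Matrix (Fin d) (Fin d) ℂ)

theorem sum_lt_qvar_add :
    ∑ i, ∑ j ∈ univ.filter (i < ·), qvar ρ (A i + A j)
      = (Fintype.card ι - 2) * ∑ i, qvar ρ (A i) + qvar ρ (∑ i, A i) := by
  have h := congrArg Complex.re (ρ.qcov.sum_lt_apply_add_add A)
  simp only [Complex.add_re, Complex.re_sum, Complex.mul_re, Complex.natCast_re,
    Complex.natCast_im, Complex.re_ofNat, Complex.im_ofNat, zero_mul, sub_zero,
    ← qvar_eq_re_qcov] at h
  linarith

theorem sum_lt_qvar_sub :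
    ∑ i, ∑ j ∈ univ.filter (i < ·), qvar ρ (A i - A j)
      = Fintype.card ι * ∑ i, qvar ρ (A i) - qvar ρ (∑ i, A i) := by
  have h := congrArg Complex.re (ρ.qcov.sum_lt_apply_sub_sub A)
  simp only [Complex.add_re, Complex.re_sum, Complex.mul_re, Complex.natCast_re,
    Complex.natCast_im, zero_mul, sub_zero, ← qvar_eq_re_qcov] at h
  linarith

end PairSumsOfVariances

theorem qvar_nonneg {d : ℕ} {ρ : Matrix (Fin d) (Fin d) ℂ} (hρ : ρ.PosSemidef) (hρ1 : ρ.trace = 1)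
    {M : Matrix (Fin d) (Fin d) ℂ} (hM : M.IsHermitian) : 0 ≤ qvar ρ M := by
  set c := (ρ * M).trace
  set K := M - (c.re : ℂ) • 1
  have hK : Kᴴ = K := by simp [K, Matrix.conjTranspose_smul, hM.eq]
  have hK_nonneg : 0 ≤ (ρ * K ^ 2).trace.re := by
    have h := (hρ.mul_mul_conjTranspose_same K).trace_nonneg
    rw [hK, Matrix.trace_mul_cycle, Matrix.trace_mul_comm, ← sq] at h
    exact (Complex.le_def.mp h).1
  have hK_sq : ρ * K ^ 2 = ρ * M ^ 2 - (2 * c.re : ℂ) • (ρ * M) + (c.re ^ 2 : ℂ) • ρ := by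
    simp only [K, sq, Matrix.sub_mul, Matrix.mul_sub, Matrix.smul_mul, Matrix.mul_smul,
      Matrix.mul_one, Matrix.one_mul]
    module
  -- `c` need not be known to be real: its imaginary part only adds `c.im ^ 2 ≥ 0`
  have hvar : qvar ρ M = (ρ * K ^ 2).trace.re + c.im ^ 2 := by
    rw [hK_sq, qvar]
    simp only [Matrix.trace_add, Matrix.trace_sub, Matrix.trace_smul, hρ1, smul_eq_mul, sq,
      Complex.add_re, Complex.sub_re, Complex.mul_re, Complex.mul_im, Complex.re_ofNat,
      Complex.im_ofNat, Complex.ofReal_re, Complex.ofReal_im, Complex.one_re, Complex.one_im]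
    ring
  rw [hvar]
  positivity

theorem two_mul_sq_sum_lt_qdev_le {ι : Type*} [Fintype ι] [LinearOrder ι] {d : ℕ}
    {ρ : Matrix (Fin d) (Fin d) ℂ} (hρ : ρ.PosSemidef) (hρ1 : ρ.trace = 1)
    {A : ι → Matrix (Fin d) (Fin d) ℂ} (hA : ∀ i, (A i).IsHermitian) :
    2 * (∑ i, ∑ j ∈ univ.filter (i < ·), qdev ρ (A i - A j)) ^ 2
      ≤ (Fintype.card ι * (Fintype.card ι - 1) : ℝ)
        * ∑ i, ∑ j ∈ univ.filter (i < ·), qvar ρ (A i - A j) := by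
  convert two_mul_sq_sum_lt_le fun i j => qdev ρ (A i - A j) using 5 with i _ j _
  exact (Real.sq_sqrt (qvar_nonneg hρ hρ1 ((hA i).sub (hA j)))).symm

theorem theorem2_Y {d N : ℕ} (hN : 2 ≤ N) (ρ : Matrix (Fin d) (Fin d) ℂ)
    (hρ : ρ.PosSemidef) (hρ1 : ρ.trace = 1)
    (A : Fin N → Matrix (Fin d) (Fin d) ℂ) (hA : ∀ i, (A i).IsHermitian)
    (α β : ℝ) (hα : 0 < α) (hβ : 0 < β) :
    ∑ i, qvar ρ (A i) ≥
      (1 / (α * N + ((N : ℝ) - 2) * β)) *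
        (β * (∑ i : Fin N, ∑ j ∈ univ.filter (fun j => i < j), qvar ρ (A i + A j)) +
         (2 * α / ((N : ℝ) * ((N : ℝ) - 1))) *
          (∑ i : Fin N, ∑ j ∈ univ.filter (fun j => i < j), qdev ρ (A i - A j)) ^ 2 +
         (α - β) * qvar ρ (∑ i, A i)) := by
  have hN' : (2 : ℝ) ≤ N := by exact_mod_cast hN
  have hsum := sum_lt_qvar_add ρ A
  have hdiff := sum_lt_qvar_sub ρ A
  have hCS := two_mul_sq_sum_lt_qdev_le hρ hρ1 hA
  rw [Fintype.card_fin] at hsum hdiff hCS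
  set T := ∑ i : Fin N, ∑ j ∈ univ.filter (fun j => i < j), qdev ρ (A i - A j)
  have hpairs : 0 < (N : ℝ) * (N - 1) := by nlinarith
  have hT : 2 * α / (N * (N - 1)) * T ^ 2
      ≤ α * ∑ i : Fin N, ∑ j ∈ univ.filter (fun j => i < j), qvar ρ (A i - A j) := by
    rw [div_mul_eq_mul_div, div_le_iff₀ hpairs]
    linarith [mul_le_mul_of_nonneg_left hCS hα.le]
  rw [hdiff] at hT
  rw [ge_iff_le, one_div_mul_eq_div, div_le_iff₀ (by positivity), hsum]
  linarith
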